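/- Let ρ(x), indexed by a finite set X with probability weights p(x), be bipartite density matrices, and let ρ̄ = Σ_x p(x) ρ(x). Then the average bipartite quantum mutual information satisfies Σ_x p(x)·I(A;B)_{ρ(x)} ≤ I(A;B)_{ρ̄} + χ({p(x), ρ(x)}_{x∈X}), where χ is the Holevo information of the ensemble. -/

import Mathlib

open Matrix Kronecker ComplexOrder

noncomputable section

/-- Matrix exponential. -/
noncomputable def mexp {ι : Type*} [Fintype ι] [DecidableEq ι] (A : Matrix ι ι ℂ) :
    Matrix ι ι ℂ := NormedSpace.exp A

/-- Matrix logarithm of a Hermitian matrix, taken on its support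
(zero eigenvalues are mapped to zero, since `Real.log 0 = 0`). -/
noncomputable def matLog {ι : Type*} [Fintype ι] [DecidableEq ι] (A : Matrix ι ι ℂ) :
    Matrix ι ι ℂ :=
  if hA : A.IsHermitian then
    (hA.eigenvectorUnitary : Matrix ι ι ℂ) *
      Matrix.diagonal (fun i => (Real.log (hA.eigenvalues i) : ℂ)) *
      (star (hA.eigenvectorUnitary : Matrix ι ι ℂ))
  else 0

/-- A density matrix: positive semidefinite with unit trace. -/
def IsDensity {ι : Type*} [Fintype ι] (ρ : Matrix ι ι ℂ) : Prop :=
  ρ.PosSemidef ∧ ρ.trace = 1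

/-- `supp ρ ⊆ supp σ`, expressed as kernel containment `ker σ ⊆ ker ρ`. -/
def SuppLE {ι : Type*} [Fintype ι] (ρ σ : Matrix ι ι ℂ) : Prop :=
  ∀ v : ι → ℂ, σ.mulVec v = 0 → ρ.mulVec v = 0

/-- Quantum relative entropy `D(ρ‖σ) = tr(ρ (log ρ - log σ))`. -/
noncomputable def relEnt {ι : Type*} [Fintype ι] [DecidableEq ι] (ρ σ : Matrix ι ι ℂ) : ℝ :=
  (Matrix.trace (ρ * (matLog ρ - matLog σ))).re

/-- Von Neumann entropy `H(ρ) = -tr(ρ log ρ)`. -/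
noncomputable def vnEntropy {ι : Type*} [Fintype ι] [DecidableEq ι] (ρ : Matrix ι ι ℂ) : ℝ :=
  - (Matrix.trace (ρ * matLog ρ)).re

/-- `L` is `α`-sub-gaussian w.r.t. the state `σ`:
`log tr(σ exp(λ(L - tr(Lσ)·I))) ≤ α²λ²/2` for all real `λ`. -/
def IsSubGaussianObs {ι : Type*} [Fintype ι] [DecidableEq ι]
    (L σ : Matrix ι ι ℂ) (α : ℝ) : Prop :=
  ∀ l : ℝ, Real.log ((Matrix.trace
      (σ * mexp ((l : ℂ) • (L - (Matrix.trace (L * σ)) • (1 : Matrix ι ι ℂ))))).re)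
    ≤ α ^ 2 * l ^ 2 / 2

/-- Partial trace over the first tensor factor. -/
noncomputable def ptraceFst {α β : Type*} [Fintype α]
    (ρ : Matrix (α × β) (α × β) ℂ) : Matrix β β ℂ :=
  Matrix.of fun i j => ∑ a, ρ (a, i) (a, j)

/-- Partial trace over the second tensor factor. -/
noncomputable def ptraceSnd {α β : Type*} [Fintype β]
    (ρ : Matrix (α × β) (α × β) ℂ) : Matrix α α ℂ :=
  Matrix.of fun i j => ∑ b, ρ (i, b) (j, b)

/-- Quantum mutual information `I(A;B)_ρ = H(ρ_A) + H(ρ_B) − H(ρ_{AB})`. -/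
noncomputable def qmi {α β : Type*} [Fintype α] [Fintype β]
    [DecidableEq α] [DecidableEq β] (ρ : Matrix (α × β) (α × β) ℂ) : ℝ :=
  vnEntropy (ptraceSnd ρ) + vnEntropy (ptraceFst ρ) - vnEntropy ρ


/-!
Expanding `I` and `χ`, the claim is `∑ₓ p(x) (H(ρ_A(x)) + H(ρ_B(x))) ≤ H(ρ̄_A) + H(ρ̄_B)`: since
partial traces are linear, this is concavity of the von Neumann entropy applied to each marginal.
Concavity follows from Klein's inequality `tr ρ log σ ≤ tr ρ log ρ + tr σ - tr ρ` (for
`supp ρ ⊆ supp σ`), used with `σ = ρ̄`. In the eigenbases `(uᵢ)` of `ρ` and `(vⱼ)` of `σ` both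
sides become sums against the doubly stochastic matrix `|⟪uᵢ, vⱼ⟫|²`, and Klein's inequality
reduces to the scalar bound `x log y ≤ x log x + y - x`.
-/

lemma Real.mul_log_le_mul_log_add_sub {x y : ℝ} (hx : 0 ≤ x) (hy : 0 ≤ y)
    (hxy : y = 0 → x = 0) :
    x * Real.log y ≤ x * Real.log x + y - x := by
  rcases hx.eq_or_lt with rfl | hx
  · simpa using hy
  have hy : 0 < y := hy.lt_of_ne fun h => hx.ne' (hxy h.symm)
  have h := Real.log_le_sub_one_of_pos (div_pos hy hx)
  rw [Real.log_div hy.ne' hx.ne'] at h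
  have h' := mul_le_mul_of_nonneg_left h hx.le
  rw [mul_sub, mul_sub, mul_div_cancel₀ y hx.ne'] at h'
  linarith

namespace Matrix

lemma sum_sum_add_mul_of_mem_doublyStochastic {R n : Type*} [Fintype n] [DecidableEq n]
    [Semiring R] [PartialOrder R] [IsOrderedRing R] {M : Matrix n n R}
    (hM : M ∈ doublyStochastic R n) (f g : n → R) :
    ∑ i, ∑ j, (f i + g j) * M i j = ∑ i, f i + ∑ j, g j := by
  simp only [add_mul, Finset.sum_add_distrib, ← Finset.mul_sum,
    sum_row_of_mem_doublyStochastic hM, mul_one]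
  rw [Finset.sum_comm]
  simp only [← Finset.mul_sum, sum_col_of_mem_doublyStochastic hM, mul_one]

variable {ι : Type*} [Fintype ι] [DecidableEq ι]

lemma sum_normSq_apply_of_mem_unitaryGroup {W : Matrix ι ι ℂ} (hW : W ∈ unitaryGroup ι ℂ)
    (i : ι) : ∑ j, Complex.normSq (W i j) = 1 := by
  have h := congr_fun (congr_fun (mem_unitaryGroup_iff.mp hW) i) i
  simp only [mul_apply, star_apply, Complex.star_def, Complex.mul_conj, one_apply_eq] at h
  exact_mod_cast h

lemma normSq_mem_doublyStochastic_of_mem_unitaryGroup {W : Matrix ι ι ℂ}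
    (hW : W ∈ unitaryGroup ι ℂ) :
    Matrix.of (fun i j => Complex.normSq (W i j)) ∈ doublyStochastic ℝ ι := by
  refine mem_doublyStochastic_iff_sum.mpr
    ⟨fun i j => Complex.normSq_nonneg _, sum_normSq_apply_of_mem_unitaryGroup hW, fun j => ?_⟩
  simpa [Complex.star_def] using sum_normSq_apply_of_mem_unitaryGroup (Unitary.star_mem hW) j

lemma trace_diagonal_mul_mul_diagonal_mul_conjTranspose (d e : ι → ℂ) (W : Matrix ι ι ℂ) :
    (diagonal d * W * diagonal e * Wᴴ).trace =
      ∑ i, ∑ j, d i * e j * Complex.normSq (W i j) := by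
  simp only [trace, diag_apply, mul_apply, diagonal_apply, conjTranspose_apply, ite_mul,
    zero_mul, mul_ite, mul_zero, Finset.sum_ite_eq, Finset.sum_ite_eq', Finset.mem_univ,
    if_true, ← Complex.mul_conj, Complex.star_def]
  refine Finset.sum_congr rfl fun i _ => Finset.sum_congr rfl fun j _ => ?_
  ring

namespace IsHermitian

variable {A B : Matrix ι ι ℂ}

lemma re_trace_eq_sum_eigenvalues (hA : A.IsHermitian) : A.trace.re = ∑ i, hA.eigenvalues i := by
  simp [hA.trace_eq_sum_eigenvalues]

lemma star_eigenvectorUnitary_mul (hA : A.IsHermitian) :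
    star (hA.eigenvectorUnitary : Matrix ι ι ℂ) * A =
      diagonal (RCLike.ofReal ∘ hA.eigenvalues) *
        star (hA.eigenvectorUnitary : Matrix ι ι ℂ) := by
  rw [congrArg (star (hA.eigenvectorUnitary : Matrix ι ι ℂ) * ·) hA.spectral_theorem]
  simp only [Unitary.conjStarAlgAut_apply, ← Matrix.mul_assoc, Unitary.coe_star_mul_self,
    Matrix.one_mul]

lemma matLog_eq (hA : A.IsHermitian) :
    matLog A = (hA.eigenvectorUnitary : Matrix ι ι ℂ) *
      diagonal (fun i => (Real.log (hA.eigenvalues i) : ℂ)) *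
      star (hA.eigenvectorUnitary : Matrix ι ι ℂ) :=
  dif_pos hA

def eigenOverlap (hA : A.IsHermitian) (hB : B.IsHermitian) : Matrix ι ι ℝ :=
  Matrix.of fun i j =>
    Complex.normSq ((star hA.eigenvectorUnitary * hB.eigenvectorUnitary : unitaryGroup ι ℂ) i j)

lemma eigenOverlap_mem_doublyStochastic (hA : A.IsHermitian) (hB : B.IsHermitian) :
    hA.eigenOverlap hB ∈ doublyStochastic ℝ ι :=
  normSq_mem_doublyStochastic_of_mem_unitaryGroup (SetLike.coe_mem _)

lemma eigenOverlap_self (hA : A.IsHermitian) (i j : ι) :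
    hA.eigenOverlap hA i j = if i = j then 1 else 0 := by
  simp [eigenOverlap, one_apply, apply_ite]

lemma trace_mul_matLog (hA : A.IsHermitian) (hB : B.IsHermitian) :
    (A * matLog B).trace = ((∑ i, ∑ j, hA.eigenvalues i * Real.log (hB.eigenvalues j) *
      hA.eigenOverlap hB i j : ℝ) : ℂ) := by
  set U : Matrix ι ι ℂ := ↑hA.eigenvectorUnitary
  set V : Matrix ι ι ℂ := ↑hB.eigenvectorUnitary
  have hUU : U * star U = 1 := Unitary.coe_mul_star_self _
  have hW : (star U * V)ᴴ = star V * U := by simp [← star_eq_conjTranspose]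
  have hconj : A * matLog B = U * (diagonal (RCLike.ofReal ∘ hA.eigenvalues) * (star U * V) *
      diagonal (fun j => (Real.log (hB.eigenvalues j) : ℂ)) * (star U * V)ᴴ) * star U := by
    conv_lhs => rw [hA.spectral_theorem, Unitary.conjStarAlgAut_apply, matLog_eq hB]
    simp only [hW, Matrix.mul_assoc, hUU, Matrix.mul_one]
    rfl
  rw [hconj, trace_mul_comm, ← Matrix.mul_assoc, Unitary.coe_star_mul_self, Matrix.one_mul,
    trace_diagonal_mul_mul_diagonal_mul_conjTranspose]
  push_cast
  rfl

lemma trace_mul_matLog_self (hA : A.IsHermitian) :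
    (A * matLog A).trace =
      ((∑ i, hA.eigenvalues i * Real.log (hA.eigenvalues i) : ℝ) : ℂ) := by
  simp [trace_mul_matLog hA hA, eigenOverlap_self]

lemma eigenvalues_mul_eigenOverlap_eq_zero (hA : A.IsHermitian) (hB : B.IsHermitian)
    (hAB : SuppLE A B) {i j : ι} (hj : hB.eigenvalues j = 0) :
    hA.eigenvalues i * hA.eigenOverlap hB i j = 0 := by
  set v := ⇑(hB.eigenvectorBasis j)
  have hAv : A *ᵥ v = 0 := hAB _ (by rw [hB.mulVec_eigenvectorBasis, hj, zero_smul])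
  have hentry : (diagonal (RCLike.ofReal ∘ hA.eigenvalues) *ᵥ
      (star (hA.eigenvectorUnitary : Matrix ι ι ℂ) *ᵥ v)) i = 0 := by
    rw [mulVec_mulVec, ← star_eigenvectorUnitary_mul, ← mulVec_mulVec, hAv, mulVec_zero]
    rfl
  rw [mulVec_diagonal] at hentry
  rcases mul_eq_zero.mp hentry with h | h
  · simp_all
  · have hW :
        (star (hA.eigenvectorUnitary : Matrix ι ι ℂ) * hB.eigenvectorUnitary) i j = 0 := h
    simp [eigenOverlap, hW]

end IsHermitian

end Matrix

section Entropy

variable {ι : Type*} [Fintype ι]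

theorem re_trace_mul_matLog_le [DecidableEq ι] {ρ σ : Matrix ι ι ℂ} (hρ : ρ.PosSemidef)
    (hσ : σ.PosSemidef) (hsupp : SuppLE ρ σ) :
    (ρ * matLog σ).trace.re ≤ (ρ * matLog ρ).trace.re + σ.trace.re - ρ.trace.re := by
  rw [hρ.1.trace_mul_matLog hσ.1, hρ.1.trace_mul_matLog_self, Complex.ofReal_re,
    Complex.ofReal_re, hρ.1.re_trace_eq_sum_eigenvalues, hσ.1.re_trace_eq_sum_eigenvalues]
  set l := hρ.1.eigenvalues
  set m := hσ.1.eigenvalues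
  set n := hρ.1.eigenOverlap hσ.1
  have hn : n ∈ doublyStochastic ℝ ι := hρ.1.eigenOverlap_mem_doublyStochastic hσ.1
  -- `matLog` sends a zero eigenvalue `mⱼ` to `log 0 = 0`; the support condition makes the
  -- corresponding terms vanish.
  have hterm : ∀ i j,
      l i * Real.log (m j) * n i j ≤ (l i * Real.log (l i) - l i + m j) * n i j := by
    intro i j
    rcases (nonneg_of_mem_doublyStochastic hn (i := i) (j := j)).eq_or_lt with h0 | hpos
    · simp [← h0]
    have hsupp_ij : m j = 0 → l i = 0 := fun hj =>
      (mul_eq_zero.mp (hρ.1.eigenvalues_mul_eigenOverlap_eq_zero hσ.1 hsupp hj)).resolve_right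
        hpos.ne'
    have := Real.mul_log_le_mul_log_add_sub (hρ.eigenvalues_nonneg i) (hσ.eigenvalues_nonneg j)
      hsupp_ij
    exact mul_le_mul_of_nonneg_right (by linarith) hpos.le
  calc ∑ i, ∑ j, l i * Real.log (m j) * n i j
      ≤ ∑ i, ∑ j, (l i * Real.log (l i) - l i + m j) * n i j :=
        Finset.sum_le_sum fun i _ => Finset.sum_le_sum fun j _ => hterm i j
    _ = _ := by
      rw [Matrix.sum_sum_add_mul_of_mem_doublyStochastic hn, Finset.sum_sub_distrib]
      ring

lemma suppLE_self_add {A B : Matrix ι ι ℂ} (hA : A.PosSemidef) (hB : B.PosSemidef) :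
    SuppLE A (A + B) := by
  intro v hv
  have h : star v ⬝ᵥ (A *ᵥ v) + star v ⬝ᵥ (B *ᵥ v) = 0 := by
    rw [← dotProduct_add, ← add_mulVec, hv, dotProduct_zero]
  rw [← hA.dotProduct_mulVec_zero_iff]
  exact ((add_eq_zero_iff_of_nonneg (hA.dotProduct_mulVec_nonneg v)
    (hB.dotProduct_mulVec_nonneg v)).mp h).1

variable {X : Type*} [Fintype X]

lemma suppLE_sum_smul {p : X → ℝ} (hp : ∀ x, 0 ≤ p x) {σ : X → Matrix ι ι ℂ}
    (hσ : ∀ x, (σ x).PosSemidef) {x : X} (hx : p x ≠ 0) :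
    SuppLE (σ x) (∑ y, (p y : ℂ) • σ y) := by
  classical
  have hpsd : ∀ y, ((p y : ℂ) • σ y).PosSemidef := fun y =>
    (hσ y).smul (Complex.zero_le_real.mpr (hp y))
  rw [← Finset.add_sum_erase _ _ (Finset.mem_univ x)]
  intro v hv
  have := suppLE_self_add (hpsd x) (posSemidef_sum _ fun y _ => hpsd y) v hv
  rw [smul_mulVec, smul_eq_zero] at this
  exact this.resolve_left (Complex.ofReal_ne_zero.mpr hx)

lemma IsDensity.sum_smul {p : X → ℝ} (hp : ∀ x, 0 ≤ p x) (hpsum : ∑ x, p x = 1)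
    {σ : X → Matrix ι ι ℂ} (hσ : ∀ x, IsDensity (σ x)) :
    IsDensity (∑ x, (p x : ℂ) • σ x) := by
  refine ⟨posSemidef_sum _ fun x _ => (hσ x).1.smul (Complex.zero_le_real.mpr (hp x)), ?_⟩
  have htr : ∀ x, (σ x).trace = 1 := fun x => (hσ x).2
  simp only [trace_sum, trace_smul, htr, smul_eq_mul, mul_one]
  exact_mod_cast hpsum

theorem sum_mul_vnEntropy_le_vnEntropy_sum_smul [DecidableEq ι] {p : X → ℝ}
    (hp : ∀ x, 0 ≤ p x) (hpsum : ∑ x, p x = 1) {σ : X → Matrix ι ι ℂ}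
    (hσ : ∀ x, IsDensity (σ x)) :
    ∑ x, p x * vnEntropy (σ x) ≤ vnEntropy (∑ x, (p x : ℂ) • σ x) := by
  set σbar := ∑ x, (p x : ℂ) • σ x
  have hσbar : IsDensity σbar := IsDensity.sum_smul hp hpsum hσ
  have hlin : vnEntropy σbar = ∑ x, p x * -(σ x * matLog σbar).trace.re := by
    simp only [vnEntropy, σbar, Finset.sum_mul, trace_sum, smul_mul, trace_smul, smul_eq_mul,
      Complex.re_sum, Complex.re_ofReal_mul, mul_neg, Finset.sum_neg_distrib]
  rw [hlin]
  refine Finset.sum_le_sum fun x _ => ?_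
  rcases (hp x).eq_or_lt with h0 | hpos
  · simp [← h0]
  refine mul_le_mul_of_nonneg_left ?_ hpos.le
  have hklein := re_trace_mul_matLog_le (hσ x).1 hσbar.1
    (suppLE_sum_smul hp (fun y => (hσ y).1) hpos.ne')
  rw [hσbar.2, (hσ x).2] at hklein
  simp only [vnEntropy]
  linarith

end Entropy

section PartialTrace

variable {α β X : Type*} [Fintype X]

lemma ptraceSnd_eq_sum_submatrix [Fintype β] (ρ : Matrix (α × β) (α × β) ℂ) :
    ptraceSnd ρ = ∑ b, ρ.submatrix (·, b) (·, b) := by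
  ext i j
  simp [ptraceSnd, Matrix.sum_apply]

lemma ptraceFst_eq_sum_submatrix [Fintype α] (ρ : Matrix (α × β) (α × β) ℂ) :
    ptraceFst ρ = ∑ a, ρ.submatrix (a, ·) (a, ·) := by
  ext i j
  simp [ptraceFst, Matrix.sum_apply]

lemma ptraceSnd_sum_smul [Fintype β] (c : X → ℂ)
    (ρ : X → Matrix (α × β) (α × β) ℂ) :
    ptraceSnd (∑ x, c x • ρ x) = ∑ x, c x • ptraceSnd (ρ x) := by
  ext i j
  simp only [ptraceSnd, of_apply, Matrix.sum_apply, Matrix.smul_apply, smul_eq_mul,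
    Finset.mul_sum]
  exact Finset.sum_comm

lemma ptraceFst_sum_smul [Fintype α] (c : X → ℂ)
    (ρ : X → Matrix (α × β) (α × β) ℂ) :
    ptraceFst (∑ x, c x • ρ x) = ∑ x, c x • ptraceFst (ρ x) := by
  ext i j
  simp only [ptraceFst, of_apply, Matrix.sum_apply, Matrix.smul_apply, smul_eq_mul,
    Finset.mul_sum]
  exact Finset.sum_comm

variable [Fintype α] [Fintype β]

lemma trace_ptraceSnd (ρ : Matrix (α × β) (α × β) ℂ) :
    (ptraceSnd ρ).trace = ρ.trace := by
  simp [trace, ptraceSnd, Fintype.sum_prod_type]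

lemma trace_ptraceFst (ρ : Matrix (α × β) (α × β) ℂ) :
    (ptraceFst ρ).trace = ρ.trace := by
  simp only [trace, diag_apply, ptraceFst, of_apply, Fintype.sum_prod_type]
  exact Finset.sum_comm

lemma IsDensity.ptraceSnd {ρ : Matrix (α × β) (α × β) ℂ} (hρ : IsDensity ρ) :
    IsDensity (ptraceSnd ρ) :=
  ⟨ptraceSnd_eq_sum_submatrix ρ ▸ posSemidef_sum _ fun _ _ => hρ.1.submatrix _,
    (trace_ptraceSnd ρ).trans hρ.2⟩

lemma IsDensity.ptraceFst {ρ : Matrix (α × β) (α × β) ℂ} (hρ : IsDensity ρ) :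
    IsDensity (ptraceFst ρ) :=
  ⟨ptraceFst_eq_sum_submatrix ρ ▸ posSemidef_sum _ fun _ _ => hρ.1.submatrix _,
    (trace_ptraceFst ρ).trans hρ.2⟩

end PartialTrace

/-- **Average mutual information bound.** For a finite ensemble of bipartite
states `{(p x, ρ x)}` with average `ρ̄`,
`Σ p x I(A;B)_{ρ x} ≤ I(A;B)_{ρ̄} + χ({p x, ρ x})`, where the Holevo information
is `χ = H(ρ̄) − Σ p x H(ρ x)`. -/
theorem avg_qmi_le_qmi_avg_add_holevo {X : Type*} [Fintype X] {a b : ℕ}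
    (p : X → ℝ) (hp : ∀ x, 0 ≤ p x) (hpsum : ∑ x, p x = 1)
    (ρ : X → Matrix (Fin a × Fin b) (Fin a × Fin b) ℂ)
    (hρ : ∀ x, IsDensity (ρ x)) :
    ∑ x, p x * qmi (ρ x)
      ≤ qmi (∑ x, (p x : ℂ) • ρ x)
        + (vnEntropy (∑ x, (p x : ℂ) • ρ x) - ∑ x, p x * vnEntropy (ρ x)) := by
  have hA := sum_mul_vnEntropy_le_vnEntropy_sum_smul hp hpsum fun x => (hρ x).ptraceSnd
  have hB := sum_mul_vnEntropy_le_vnEntropy_sum_smul hp hpsum fun x => (hρ x).ptraceFst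
  rw [← ptraceSnd_sum_smul] at hA
  rw [← ptraceFst_sum_smul] at hB
  simp only [qmi, mul_sub, mul_add, Finset.sum_sub_distrib, Finset.sum_add_distrib]
  linarith
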